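/- Assume 0 ≤ λ < λ̃. Then the spread s ↦ P̃(s) − P(s) is nonnegative and nondecreasing on (0, ∞), and P̃(s) − P(s) → (λ̃/(r+λ̃) − λ/(r+λ))·K > 0 as s → ∞. In particular the buyer's timing-option value Ĵ admits the constant upper bound (λ̃/(r+λ̃) − λ/(r+λ))·K. -/

import Mathlib

open Real Filter

/-- `θ = 2(r+λ)/σ²`. -/
noncomputable def perpTheta (r lam sigma : ℝ) : ℝ := 2 * (r + lam) / sigma ^ 2

/-- Optimal exercise threshold `b* = 2rK/(2(r+λ) + σ²)`. -/
noncomputable def perpBstar (r lam sigma K : ℝ) : ℝ := 2 * r * K / (2 * (r + lam) + sigma ^ 2)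

/-- Market price of a perpetual American put (strike `K`) on a defaultable stock
with constant default intensity `λ`. -/
noncomputable def perpPut (r lam sigma K s : ℝ) : ℝ :=
  if s ≤ perpBstar r lam sigma K then K - s
  else (r * K / ((r + lam) * (perpTheta r lam sigma + 1)))
        * (s / perpBstar r lam sigma K) ^ (-(perpTheta r lam sigma)) + lam * K / (r + lam)

/-- The function `B(s) = (r+λ)·(b̃*/s)^{θ̃} − (r+λ̃)·(b*/s)^{θ} + (λ̃ − λ)`. -/
noncomputable def purchaseB (r lam lamt sigma K s : ℝ) : ℝ :=
  (r + lam) * (perpBstar r lamt sigma K / s) ^ perpTheta r lamt sigma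
    - (r + lamt) * (perpBstar r lam sigma K / s) ^ perpTheta r lam sigma
    + (lamt - lam)

/-- Candidate value `Ĵ` of the buyer's timing option:
`Ĵ(s) = A·s` for `0 < s < s*` and `Ĵ(s) = P̃(s) − P(s)` for `s ≥ s*`. -/
noncomputable def Jhat (r lam lamt sigma K sstar A s : ℝ) : ℝ :=
  if s < sstar then A * s else perpPut r lamt sigma K s - perpPut r lam sigma K s

/-!
The put price is `C¹` in `s` with `P'(s) = -min(b*/s, 1)^(θ+1)`. A larger default intensity lowers
`b*` and raises `θ`, so `P̃' ≥ P'` and the spread `P̃ - P` is nondecreasing; it vanishes below `b̃*`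
and tends to the difference of the constant terms `λK/(r+λ)`. For `s ≥ b*` one has
`P(s) = (rK(b*/s)^θ + λK)/(r+λ) + s·P'(s)`, so `B(s*) = 0` says precisely that
`P̃(s*) - P(s*) = s*·(P̃'(s*) - P'(s*)) = A·s*`: the linear piece of `Ĵ` has slope `A ≥ 0` and meets
the spread at `s*`, hence stays below its limit.
-/

open Set Topology

theorem hasDerivAt_of_eqOn_Iic_of_eqOn_Ici {F : Type*} [NormedAddCommGroup F] [NormedSpace ℝ F]
    {f g h : ℝ → F} {a : ℝ} {d : F} (hg : HasDerivAt g d a) (hh : HasDerivAt h d a)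
    (hfg : EqOn f g (Iic a)) (hfh : EqOn f h (Ici a)) : HasDerivAt f d a := by
  rw [← hasDerivWithinAt_univ, ← Iic_union_Ici (a := a)]
  exact (hg.hasDerivWithinAt.congr hfg (hfg self_mem_Iic)).union
    (hh.hasDerivWithinAt.congr hfh (hfh self_mem_Ici))

theorem MonotoneOn.le_of_tendsto_atTop {α β : Type*} [LinearOrder α] [Preorder β]
    [TopologicalSpace β] [OrderClosedTopology β] {f : α → β} {a x : α} {L : β}
    (hf : MonotoneOn f (Ioi a)) (hL : Tendsto f atTop (𝓝 L)) (hx : x ∈ Ioi a) : f x ≤ L :=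
  have : Nonempty α := ⟨x⟩
  ge_of_tendsto hL (eventually_atTop.mpr ⟨x, fun _ hy => hf hx (lt_of_lt_of_le hx hy) hy⟩)

noncomputable def perpCoef (r lam sigma K : ℝ) : ℝ :=
  r * K / ((r + lam) * (perpTheta r lam sigma + 1))

noncomputable def perpCont (r lam sigma K s : ℝ) : ℝ :=
  perpCoef r lam sigma K * (s / perpBstar r lam sigma K) ^ (-perpTheta r lam sigma)
    + lam * K / (r + lam)

noncomputable def perpPutDeriv (r lam sigma K s : ℝ) : ℝ :=
  -min (perpBstar r lam sigma K / s) 1 ^ (perpTheta r lam sigma + 1)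

noncomputable def perpSpread (r lam lamt sigma K s : ℝ) : ℝ :=
  perpPut r lamt sigma K s - perpPut r lam sigma K s

section

variable {r lam lamt sigma K s : ℝ}

theorem perpTheta_pos (hrl : 0 < r + lam) (hsigma : sigma ≠ 0) : 0 < perpTheta r lam sigma :=
  div_pos (by linarith) (by positivity)

theorem perpTheta_le_perpTheta (hle : lam ≤ lamt) : perpTheta r lam sigma ≤ perpTheta r lamt sigma :=
  div_le_div_of_nonneg_right (by linarith) (sq_nonneg sigma)

theorem perpBstar_pos (hr : 0 < r) (hK : 0 < K) (hrl : 0 < r + lam) :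
    0 < perpBstar r lam sigma K :=
  div_pos (by positivity) (by positivity)

theorem perpBstar_le_perpBstar (hr : 0 < r) (hK : 0 < K) (hrl : 0 < r + lam) (hle : lam ≤ lamt) :
    perpBstar r lamt sigma K ≤ perpBstar r lam sigma K :=
  div_le_div_of_nonneg_left (by positivity) (by positivity) (by linarith)

theorem perpTheta_mul_perpCoef (hrl : 0 < r + lam) (hsigma : sigma ≠ 0) :
    perpTheta r lam sigma * perpCoef r lam sigma K = perpBstar r lam sigma K := by
  have : 0 < 2 * (r + lam) + sigma ^ 2 := by positivity
  unfold perpCoef perpTheta perpBstar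
  field_simp

theorem perpCoef_eq (hrl : 0 < r + lam) (hsigma : sigma ≠ 0) :
    perpCoef r lam sigma K = r * K / (r + lam) - perpBstar r lam sigma K := by
  have : 0 < 2 * (r + lam) + sigma ^ 2 := by positivity
  unfold perpCoef perpTheta perpBstar
  field_simp
  ring

theorem perpCont_eq (s : ℝ) :
    perpCont r lam sigma K s = perpCoef r lam sigma K
      * (perpBstar r lam sigma K / s) ^ perpTheta r lam sigma + lam * K / (r + lam) := by
  rw [perpCont, Real.rpow_neg_eq_inv_rpow, inv_div]

theorem hasDerivAt_perpCont (hrl : 0 < r + lam) (hsigma : sigma ≠ 0)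
    (hb : 0 < perpBstar r lam sigma K) (hs : 0 < s) :
    HasDerivAt (perpCont r lam sigma K)
      (-(perpBstar r lam sigma K / s) ^ (perpTheta r lam sigma + 1)) s := by
  set b := perpBstar r lam sigma K
  set θ := perpTheta r lam sigma
  have hpow : HasDerivAt (fun t => (t / b) ^ (-θ)) (1 / b * (-θ) * (s / b) ^ (-θ - 1)) s :=
    ((hasDerivAt_id s).div_const b).rpow_const (Or.inl (by positivity))
  refine ((hpow.const_mul (perpCoef r lam sigma K)).add_const (lam * K / (r + lam))).congr_deriv ?_
  have hθC : θ * perpCoef r lam sigma K = b := perpTheta_mul_perpCoef hrl hsigma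
  rw [show -θ - 1 = -(θ + 1) by ring, Real.rpow_neg_eq_inv_rpow, inv_div]
  calc perpCoef r lam sigma K * (1 / b * -θ * (b / s) ^ (θ + 1))
      = -(θ * perpCoef r lam sigma K / b) * (b / s) ^ (θ + 1) := by ring
    _ = -(b / s) ^ (θ + 1) := by rw [hθC, div_self hb.ne', neg_one_mul]

theorem perpPut_eqOn_Iic : EqOn (perpPut r lam sigma K) (fun t => K - t)
    (Iic (perpBstar r lam sigma K)) :=
  fun _ hs => if_pos hs

theorem perpPut_eqOn_Ici (hrl : 0 < r + lam) (hsigma : sigma ≠ 0)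
    (hb : 0 < perpBstar r lam sigma K) :
    EqOn (perpPut r lam sigma K) (perpCont r lam sigma K) (Ici (perpBstar r lam sigma K)) := by
  intro s hs
  rcases (mem_Ici.mp hs).eq_or_lt with rfl | hlt
  · rw [perpPut_eqOn_Iic self_mem_Iic, perpCont_eq, div_self hb.ne', Real.one_rpow,
      perpCoef_eq hrl hsigma]
    field_simp
    ring
  · exact if_neg hlt.not_ge

theorem hasDerivAt_perpPut (hrl : 0 < r + lam) (hsigma : sigma ≠ 0)
    (hb : 0 < perpBstar r lam sigma K) (hs : 0 < s) :
    HasDerivAt (perpPut r lam sigma K) (perpPutDeriv r lam sigma K s) s := by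
  set b := perpBstar r lam sigma K
  have hlin : HasDerivAt (fun t => K - t) (-1) s := by
    simpa using (hasDerivAt_id s).const_sub K
  rcases lt_trichotomy s b with hsb | hsb | hbs
  · have hD : perpPutDeriv r lam sigma K s = -1 := by
      rw [perpPutDeriv, min_eq_right ((one_le_div hs).mpr hsb.le), Real.one_rpow]
    rw [hD]
    exact hlin.congr_of_eventuallyEq
      (eventually_of_mem (Iic_mem_nhds hsb) perpPut_eqOn_Iic)
  · subst hsb
    have hD : perpPutDeriv r lam sigma K b = -1 := by
      rw [perpPutDeriv, div_self hb.ne', min_self, Real.one_rpow]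
    have hcont := hasDerivAt_perpCont hrl hsigma hb hs
    rw [div_self hb.ne', Real.one_rpow] at hcont
    rw [hD]
    exact hasDerivAt_of_eqOn_Iic_of_eqOn_Ici hlin hcont perpPut_eqOn_Iic
      (perpPut_eqOn_Ici hrl hsigma hb)
  · rw [perpPutDeriv, min_eq_left ((div_le_one hs).mpr hbs.le)]
    exact (hasDerivAt_perpCont hrl hsigma hb hs).congr_of_eventuallyEq
      (eventually_of_mem (Ici_mem_nhds hbs) (perpPut_eqOn_Ici hrl hsigma hb))

theorem tendsto_perpPut_atTop (hrl : 0 < r + lam) (hsigma : sigma ≠ 0)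
    (hb : 0 < perpBstar r lam sigma K) :
    Tendsto (perpPut r lam sigma K) atTop (𝓝 (lam * K / (r + lam))) := by
  have hpow : Tendsto (fun s => (s / perpBstar r lam sigma K) ^ (-perpTheta r lam sigma))
      atTop (𝓝 0) :=
    (tendsto_rpow_neg_atTop (perpTheta_pos hrl hsigma)).comp (tendsto_id.atTop_div_const hb)
  have hcont := (hpow.const_mul (perpCoef r lam sigma K)).add_const (lam * K / (r + lam))
  rw [mul_zero, zero_add] at hcont
  exact hcont.congr' (eventually_of_mem (Ici_mem_atTop _) (perpPut_eqOn_Ici hrl hsigma hb).symm)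

theorem perpPutDeriv_le_perpPutDeriv (hr : 0 < r) (hK : 0 < K) (hrl : 0 < r + lam)
    (hle : lam ≤ lamt) (hs : 0 < s) :
    perpPutDeriv r lam sigma K s ≤ perpPutDeriv r lamt sigma K s := by
  have hb : 0 < perpBstar r lam sigma K := perpBstar_pos hr hK hrl
  have hbt : 0 < perpBstar r lamt sigma K := perpBstar_pos hr hK (by linarith)
  have hθt : 0 ≤ perpTheta r lamt sigma := div_nonneg (by linarith) (sq_nonneg sigma)
  have hmin : min (perpBstar r lamt sigma K / s) 1 ≤ min (perpBstar r lam sigma K / s) 1 :=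
    min_le_min_right 1 (div_le_div_of_nonneg_right (perpBstar_le_perpBstar hr hK hrl hle) hs.le)
  rw [perpPutDeriv, perpPutDeriv, neg_le_neg_iff]
  calc min (perpBstar r lamt sigma K / s) 1 ^ (perpTheta r lamt sigma + 1)
      ≤ min (perpBstar r lam sigma K / s) 1 ^ (perpTheta r lamt sigma + 1) :=
        Real.rpow_le_rpow (by positivity) hmin (by linarith)
    _ ≤ min (perpBstar r lam sigma K / s) 1 ^ (perpTheta r lam sigma + 1) :=
        Real.rpow_le_rpow_of_exponent_ge (by positivity) (min_le_right _ _)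
          (add_le_add_left (perpTheta_le_perpTheta hle) 1)

theorem perpSpread_monotoneOn (hr : 0 < r) (hK : 0 < K) (hrl : 0 < r + lam)
    (hsigma : sigma ≠ 0) (hle : lam ≤ lamt) :
    MonotoneOn (perpSpread r lam lamt sigma K) (Ioi 0) := by
  have hrlt : 0 < r + lamt := by linarith
  have hderiv : ∀ s ∈ Ioi (0 : ℝ), HasDerivAt (perpSpread r lam lamt sigma K)
      (perpPutDeriv r lamt sigma K s - perpPutDeriv r lam sigma K s) s := fun s hs =>
    (hasDerivAt_perpPut hrlt hsigma (perpBstar_pos hr hK hrlt) hs).sub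
      (hasDerivAt_perpPut hrl hsigma (perpBstar_pos hr hK hrl) hs)
  refine monotoneOn_of_hasDerivWithinAt_nonneg (convex_Ioi 0)
    (fun s hs => (hderiv s hs).continuousAt.continuousWithinAt)
    (fun s hs => (hderiv s (interior_subset hs)).hasDerivWithinAt) fun s hs => ?_
  exact sub_nonneg.mpr (perpPutDeriv_le_perpPutDeriv hr hK hrl hle (interior_subset hs))

theorem perpSpread_eq_zero_of_le (hr : 0 < r) (hK : 0 < K) (hrl : 0 < r + lam)
    (hle : lam ≤ lamt) (hs : s ≤ perpBstar r lamt sigma K) :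
    perpSpread r lam lamt sigma K s = 0 := by
  rw [perpSpread, perpPut_eqOn_Iic hs,
    perpPut_eqOn_Iic (hs.trans (perpBstar_le_perpBstar hr hK hrl hle)), sub_self]

theorem perpSpread_nonneg (hr : 0 < r) (hK : 0 < K) (hrl : 0 < r + lam)
    (hsigma : sigma ≠ 0) (hle : lam ≤ lamt) (hs : 0 < s) :
    0 ≤ perpSpread r lam lamt sigma K s := by
  rcases le_total s (perpBstar r lamt sigma K) with hsb | hbs
  · exact (perpSpread_eq_zero_of_le hr hK hrl hle hsb).ge
  · rw [← perpSpread_eq_zero_of_le hr hK hrl hle le_rfl]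
    exact perpSpread_monotoneOn hr hK hrl hsigma hle (perpBstar_pos hr hK (by linarith)) hs hbs

theorem tendsto_perpSpread_atTop (hr : 0 < r) (hK : 0 < K) (hrl : 0 < r + lam)
    (hsigma : sigma ≠ 0) (hle : lam ≤ lamt) :
    Tendsto (perpSpread r lam lamt sigma K) atTop
      (𝓝 ((lamt / (r + lamt) - lam / (r + lam)) * K)) := by
  have hrlt : 0 < r + lamt := by linarith
  rw [sub_mul, div_mul_eq_mul_div, div_mul_eq_mul_div]
  exact (tendsto_perpPut_atTop hrlt hsigma (perpBstar_pos hr hK hrlt)).sub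
    (tendsto_perpPut_atTop hrl hsigma (perpBstar_pos hr hK hrl))

theorem perpSpread_limit_pos (hr : 0 < r) (hK : 0 < K) (hrl : 0 < r + lam) (hlt : lam < lamt) :
    0 < (lamt / (r + lamt) - lam / (r + lam)) * K := by
  refine mul_pos ?_ hK
  rw [sub_pos, div_lt_div_iff₀ hrl (by linarith)]
  nlinarith

theorem perpPut_eq_of_le (hrl : 0 < r + lam) (hsigma : sigma ≠ 0)
    (hb : 0 < perpBstar r lam sigma K) (hbs : perpBstar r lam sigma K ≤ s) :
    perpPut r lam sigma K s
      = (r * K * (perpBstar r lam sigma K / s) ^ perpTheta r lam sigma + lam * K) / (r + lam)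
        + s * perpPutDeriv r lam sigma K s := by
  have hs : 0 < s := hb.trans_le hbs
  rw [perpPut_eqOn_Ici hrl hsigma hb hbs, perpCont_eq, perpCoef_eq hrl hsigma, perpPutDeriv,
    min_eq_left ((div_le_one hs).mpr hbs), Real.rpow_add_one (by positivity)]
  field_simp
  ring

theorem neg_perpPutDeriv_eq (hrl : 0 < r + lam) (hsigma : sigma ≠ 0)
    (hb : 0 < perpBstar r lam sigma K) (hbs : perpBstar r lam sigma K ≤ s) :
    -perpPutDeriv r lam sigma K s
      = r * K * perpTheta r lam sigma / ((r + lam) * (perpTheta r lam sigma + 1) * s)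
        * (perpBstar r lam sigma K / s) ^ perpTheta r lam sigma := by
  have hs : 0 < s := hb.trans_le hbs
  have hcoef : r * K * perpTheta r lam sigma / ((r + lam) * (perpTheta r lam sigma + 1) * s)
      = perpBstar r lam sigma K / s := by
    have := perpTheta_pos hrl hsigma
    rw [← perpTheta_mul_perpCoef hrl hsigma, perpCoef]
    field_simp
  rw [perpPutDeriv, neg_neg, min_eq_left ((div_le_one hs).mpr hbs),
    Real.rpow_add_one (by positivity), hcoef, mul_comm]

theorem perpSpread_eq_of_purchaseB_eq_zero (hr : 0 < r) (hK : 0 < K) (hrl : 0 < r + lam)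
    (hsigma : sigma ≠ 0) (hle : lam ≤ lamt) (hbs : perpBstar r lam sigma K ≤ s)
    (hroot : purchaseB r lam lamt sigma K s = 0) :
    perpSpread r lam lamt sigma K s
      = s * (perpPutDeriv r lamt sigma K s - perpPutDeriv r lam sigma K s) := by
  have hrlt : 0 < r + lamt := by linarith
  rw [perpSpread, perpPut_eq_of_le hrl hsigma (perpBstar_pos hr hK hrl) hbs,
    perpPut_eq_of_le hrlt hsigma (perpBstar_pos hr hK hrlt)
      ((perpBstar_le_perpBstar hr hK hrl hle).trans hbs)]
  rw [purchaseB] at hroot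
  field_simp
  linear_combination (r * K) * hroot

theorem Jhat_le {A sstar L : ℝ} (hA : 0 ≤ A)
    (hmatch : A * sstar = perpSpread r lam lamt sigma K sstar)
    (hbound : ∀ s ∈ Ioi (0 : ℝ), perpSpread r lam lamt sigma K s ≤ L)
    (hsstar : 0 < sstar) (hs : 0 < s) :
    Jhat r lam lamt sigma K sstar A s ≤ L := by
  rw [Jhat]
  split_ifs with hlt
  · calc A * s ≤ A * sstar := mul_le_mul_of_nonneg_left hlt.le hA
      _ ≤ L := hmatch ▸ hbound sstar hsstar
  · exact hbound s hs

end

/-- **Monotonicity and asymptotics of the perpetual-put spread.**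
Assume `0 ≤ λ < λ̃`.  Then `s ↦ P̃(s) − P(s)` is nonnegative and nondecreasing
on `(0,∞)` and tends to `(λ̃/(r+λ̃) − λ/(r+λ))·K > 0` as `s → ∞`.  In particular
the buyer's timing-option value `Ĵ` admits the constant upper bound
`(λ̃/(r+λ̃) − λ/(r+λ))·K`. -/
theorem perpPut_spread_monotone_bounded
    (r lam lamt sigma K : ℝ) (hr : 0 < r) (hsigma : 0 < sigma) (hK : 0 < K)
    (hlam : 0 ≤ lam) (hlt : lam < lamt)
    (sstar : ℝ) (hsstar : sstar ∈ Set.Ioi (perpBstar r lam sigma K))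
    (hroot : purchaseB r lam lamt sigma K sstar = 0)
    (A : ℝ)
    (hA : A = r * K * perpTheta r lam sigma
            / ((r + lam) * (perpTheta r lam sigma + 1) * sstar)
            * (perpBstar r lam sigma K / sstar) ^ perpTheta r lam sigma
          - r * K * perpTheta r lamt sigma
            / ((r + lamt) * (perpTheta r lamt sigma + 1) * sstar)
            * (perpBstar r lamt sigma K / sstar) ^ perpTheta r lamt sigma) :
    (∀ s ∈ Set.Ioi (0 : ℝ), 0 ≤ perpPut r lamt sigma K s - perpPut r lam sigma K s)
    ∧ MonotoneOn (fun s => perpPut r lamt sigma K s - perpPut r lam sigma K s)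
        (Set.Ioi 0)
    ∧ Tendsto (fun s => perpPut r lamt sigma K s - perpPut r lam sigma K s)
        atTop (nhds ((lamt / (r + lamt) - lam / (r + lam)) * K))
    ∧ 0 < (lamt / (r + lamt) - lam / (r + lam)) * K
    ∧ ∀ s ∈ Set.Ioi (0 : ℝ),
        Jhat r lam lamt sigma K sstar A s
          ≤ (lamt / (r + lamt) - lam / (r + lam)) * K := by
  have hrl : 0 < r + lam := by linarith
  have hrlt : 0 < r + lamt := by linarith
  have hb : 0 < perpBstar r lam sigma K := perpBstar_pos hr hK hrl
  have hbs : perpBstar r lam sigma K ≤ sstar := le_of_lt hsstar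
  have hmono := perpSpread_monotoneOn hr hK hrl hsigma.ne' hlt.le
  have htendsto := tendsto_perpSpread_atTop hr hK hrl hsigma.ne' hlt.le
  have hA' : A = perpPutDeriv r lamt sigma K sstar - perpPutDeriv r lam sigma K sstar := by
    rw [hA, ← neg_perpPutDeriv_eq hrl hsigma.ne' hb hbs,
      ← neg_perpPutDeriv_eq hrlt hsigma.ne' (perpBstar_pos hr hK hrlt)
        ((perpBstar_le_perpBstar hr hK hrl hlt.le).trans hbs), neg_sub_neg]
  refine ⟨fun s hs => perpSpread_nonneg hr hK hrl hsigma.ne' hlt.le hs, hmono, htendsto,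
    perpSpread_limit_pos hr hK hrl hlt, fun s hs => Jhat_le ?_ ?_ ?_ (hb.trans hsstar) hs⟩
  · exact hA' ▸ sub_nonneg.mpr
      (perpPutDeriv_le_perpPutDeriv hr hK hrl hlt.le (hb.trans hsstar))
  · rw [hA', perpSpread_eq_of_purchaseB_eq_zero hr hK hrl hsigma.ne' hlt.le hbs hroot, mul_comm]
  · exact fun s hs => hmono.le_of_tendsto_atTop htendsto hs
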